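/- arXiv:2108.02004 — 11 statements merged into one kernel-verified Lean document; each statement's English description precedes it below -/
import Mathlib

section
/- Every prime number p with p ≥ 281 belongs to the set A = {10a + 11b : a ≥ 1, b ≥ 2a+1, gcd(a,b) = 1}. -/
def A : Set ℕ := {n | ∃ a b : ℕ, n = 10 * a + 11 * b ∧ 1 ≤ a ∧ 2 * a + 1 ≤ b ∧ Nat.gcd a b = 1}

/-! Modulo 11 we have `p ≡ 10a`, which forces `a ≡ -p`; the least such `a ≥ 1` is `a = 11 - p % 11 ≤ 10`.
The remaining `b = (p - 10a) / 11` satisfies `b ≥ 2a + 1` exactly when `p ≥ 32a + 11`, which holds for all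
`p ≥ 331` (as `a ≤ 10`) and is checked directly for the primes in `[281, 331)`. Coprimality is automatic: `gcd a b`
divides the prime `p` and is at most `a < p`. -/

theorem Nat.Prime.mod_ne_zero_of_lt {p q : ℕ} (hp : p.Prime) (hq : 1 < q) (hqp : q < p) :
    p % q ≠ 0 := fun h0 => by
  rcases hp.eq_one_or_self_of_dvd q (Nat.dvd_of_mod_eq_zero h0) with h | h <;> omega

theorem Nat.Prime.coprime_of_eq_mul_add_mul {p a b m k : ℕ} (hp : p.Prime) (hpab : p = m * a + k * b)
    (ha : 0 < a) (hap : a < p) : Nat.Coprime a b := by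
  have hdvd : Nat.gcd a b ∣ p :=
    hpab ▸ dvd_add ((Nat.gcd_dvd_left a b).mul_left m) ((Nat.gcd_dvd_right a b).mul_left k)
  have hle : Nat.gcd a b ≤ a := Nat.le_of_dvd ha (Nat.gcd_dvd_left a b)
  exact (hp.eq_one_or_self_of_dvd _ hdvd).resolve_right (by omega)

theorem mem_A_of_prime_of_le {p : ℕ} (hp : p.Prime) (hle : 32 * (11 - p % 11) + 11 ≤ p) : p ∈ A := by
  have hmod : p % 11 ≠ 0 := hp.mod_ne_zero_of_lt (by norm_num) (by omega)
  have hdiv : p % 11 + 11 * (p / 11) = p := Nat.mod_add_div p 11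
  have hlt : p % 11 < 11 := Nat.mod_lt _ (by norm_num)
  have hrepr : p = 10 * (11 - p % 11) + 11 * (p / 11 + p % 11 - 10) := by omega
  exact ⟨_, _, hrepr, by omega, by omega,
    hp.coprime_of_eq_mul_add_mul hrepr (by omega) (by omega)⟩

theorem stmt_0 (p : ℕ) (hp : p.Prime) (h : 281 ≤ p) : p ∈ A := by
  apply mem_A_of_prime_of_le hp
  by_cases h331 : 331 ≤ p
  · have hmod : p % 11 ≠ 0 := hp.mod_ne_zero_of_lt (by norm_num) (by omega)
    omega
  · interval_cases p <;> first | decide | norm_num at hp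
end

section
/- 1674 is the greatest natural number not belonging to A: that is, 1674 ∉ A and for all n > 1674, n ∈ A, where A = {10a + 11b : a ≥ 1, b ≥ 2a+1, gcd(a,b) = 1}. -/
/-!
Write `n = 10a + 11b`. Then `b ≥ 2a + 1` means `32a + 11 ≤ n`, and `gcd(a, n) = gcd(a, 11b)`.
So for `11 ∤ n` it suffices to find `a ≡ -n (mod 11)` coprime to `n` with `32a + 11 ≤ n`; for
`n = 11μ` take `a = 11a'` with `a'` coprime to `μ`, `32a' + 11 ≤ μ` and `11 ∤ μ - 10a'`.

Such an `a` comes from the Chinese remainder theorem: fix it modulo 11 and make it `≡ 1` modulo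
every prime factor of `n` except 11 and at most four primes `≥ 5`. Of five successive shifts by the
modulus, each of those four primes divides at most one, so some shift is coprime to `n`. The result
is small enough once `n ≥ 10539` (resp. `μ ≥ 10539`); below that a computation finds `a`.
-/

open Finset

theorem exists_lt_forall_not_dvd_add_mul {k d : ℕ} (B : Finset ℕ)
    (hB : ∀ p ∈ B, k ≤ p ∧ Nat.Coprime p d) (hcard : #B < k) (x₀ : ℕ) :
    ∃ j < k, ∀ p ∈ B, ¬ p ∣ x₀ + d * j := by
  classical
  have hone : ∀ p ∈ B, #{j ∈ range k | p ∣ x₀ + d * j} ≤ 1 := by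
    intro p hp
    refine card_le_one.2 fun i hi j hj => ?_
    simp only [mem_filter, mem_range] at hi hj
    have hij : x₀ + d * i ≡ x₀ + d * j [MOD p] :=
      (Nat.modEq_zero_iff_dvd.2 hi.2).trans (Nat.modEq_zero_iff_dvd.2 hj.2).symm
    have hkp := (hB p hp).1
    exact (Nat.ModEq.cancel_left_of_coprime (hB p hp).2 (hij.add_left_cancel' x₀)).eq_of_lt_of_lt
      (by omega) (by omega)
  obtain ⟨j, hj, hjbad⟩ :
      ∃ j ∈ range k, j ∉ B.biUnion fun p => {j ∈ range k | p ∣ x₀ + d * j} := by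
    refine exists_mem_notMem_of_card_lt_card ?_
    calc #(B.biUnion _) ≤ ∑ p ∈ B, #{j ∈ range k | p ∣ x₀ + d * j} := card_biUnion_le
      _ ≤ ∑ _p ∈ B, 1 := sum_le_sum hone
      _ < #(range k) := by simpa using hcard
  exact ⟨j, mem_range.1 hj, fun p hp hdvd =>
    hjbad (mem_biUnion.2 ⟨p, hp, mem_filter.2 ⟨hj, hdvd⟩⟩)⟩

theorem Nat.Prime.coprime_prod_of_notMem {p : ℕ} (hp : p.Prime) {S : Finset ℕ}
    (hS : ∀ q ∈ S, q.Prime) (hpS : p ∉ S) : Nat.Coprime p (∏ q ∈ S, q) :=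
  Nat.Coprime.prod_right fun q hq => (Nat.coprime_primes hp (hS q hq)).2 fun h => hpS (h ▸ hq)

theorem exists_lt_modEq_coprime {q k m : ℕ} (hq : q.Prime) (hm : m ≠ 0) {c : ℕ} (hc : ¬ q ∣ c)
    (S B : Finset ℕ) (hS : ∀ p ∈ S, p.Prime) (hqS : q ∉ S)
    (hB : ∀ p ∈ B, k ≤ p ∧ Nat.Coprime p (q * ∏ p ∈ S, p)) (hBcard : #B < k)
    (hmS : m.primeFactors ⊆ insert q (S ∪ B)) :
    ∃ x < q * (∏ p ∈ S, p) * k, x ≡ c [MOD q] ∧ Nat.Coprime x m := by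
  set P := ∏ p ∈ S, p
  have hP : P ≠ 0 := prod_ne_zero_iff.2 fun p hp => (hS p hp).ne_zero
  have hqP : Nat.Coprime q P := hq.coprime_prod_of_notMem hS hqS
  set x₀ := Nat.chineseRemainder hqP c 1
  have hx₀ : (x₀ : ℕ) < q * P := Nat.chineseRemainder_lt_mul hqP c 1 hq.ne_zero hP
  obtain ⟨j, hjk, hjB⟩ := exists_lt_forall_not_dvd_add_mul B hB hBcard x₀
  have hshift : ∀ r, r ∣ q * P → x₀ + q * P * j ≡ x₀ [MOD r] := fun r hr =>
    (Nat.modEq_zero_iff_dvd.2 (hr.mul_right j)).add_left x₀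
  refine ⟨x₀ + q * P * j, ?_, (hshift q (dvd_mul_right q P)).trans x₀.2.1, ?_⟩
  · calc x₀ + q * P * j < q * P * (j + 1) := by linarith
      _ ≤ q * P * k := Nat.mul_le_mul_left _ hjk
  refine Nat.coprime_of_dvd fun r hr hrx hrm => ?_
  have hxP : x₀ + q * P * j ≡ 1 [MOD P] := (hshift P (dvd_mul_left P q)).trans x₀.2.2
  rcases mem_insert.1 (hmS (Nat.mem_primeFactors.2 ⟨hr, hrm, hm⟩)) with rfl | hrSB
  · exact hc ((((hshift r (dvd_mul_right r P)).trans x₀.2.1).dvd_iff dvd_rfl).1 hrx)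
  rcases mem_union.1 hrSB with hrS | hrB
  · have hr1 : r ∣ 1 := ((hxP.of_dvd (dvd_prod_of_mem id hrS)).dvd_iff dvd_rfl).1 hrx
    exact hr.one_lt.ne' (Nat.dvd_one.1 hr1)
  · exact hjB r hrB hrx

theorem le_prod_of_card_eq_four (B : Finset ℕ) (hB : ∀ p ∈ B, p.Prime ∧ 5 ≤ p ∧ p ≠ 11)
    (hcard : #B = 4) : 5 ^ 2 * 13 ^ 2 ≤ ∏ p ∈ B, p := by
  classical
  have hlarge : ∀ p ∈ B \ {5, 7}, 13 ≤ p := by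
    intro p hp
    obtain ⟨hpB, hp57⟩ := mem_sdiff.1 hp
    obtain ⟨hprime, h5, h11⟩ := hB p hpB
    simp only [mem_insert, mem_singleton, not_or] at hp57
    by_contra! hlt
    interval_cases p <;> norm_num at *
  obtain ⟨T, hT, hTcard⟩ : ∃ T ⊆ B \ {5, 7}, #T = 2 :=
    exists_subset_card_eq (by have := le_card_sdiff {5, 7} B; simp at this; omega)
  have hTB : T ⊆ B := hT.trans sdiff_subset
  rw [← prod_sdiff hTB]
  refine Nat.mul_le_mul ?_ ?_
  · calc 5 ^ 2 = 5 ^ #(B \ T) := by rw [card_sdiff_of_subset hTB, hcard, hTcard]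
      _ ≤ ∏ p ∈ B \ T, p := pow_card_le_prod _ _ _ fun p hp => (hB p (mem_sdiff.1 hp).1).2.1
  · calc 13 ^ 2 = 13 ^ #T := by rw [hTcard]
      _ ≤ ∏ p ∈ T, p := pow_card_le_prod _ _ _ fun p hp => hlarge p (hT hp)

theorem exists_modEq_coprime_of_le {m c : ℕ} (hc : ¬ 11 ∣ c) (hm : 10539 ≤ m) :
    ∃ x, x ≡ c [MOD 11] ∧ 32 * x + 11 ≤ m ∧ Nat.Coprime x m := by
  classical
  set D := m.primeFactors.erase 11
  set L := {p ∈ D | 5 ≤ p}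
  obtain ⟨B, hBL, hBcard⟩ := exists_subset_card_eq (min_le_right 4 #L)
  set S := D \ B
  have hD : ∀ p ∈ D, p.Prime ∧ p ≠ 11 := fun p hp =>
    ⟨Nat.prime_of_mem_primeFactors (mem_of_mem_erase hp), ne_of_mem_erase hp⟩
  have hBD : B ⊆ D := hBL.trans (filter_subset _ _)
  have hSprime : ∀ p ∈ S, p.Prime := fun p hp => (hD p (mem_sdiff.1 hp).1).1
  have hB : ∀ p ∈ B, 5 ≤ p ∧ Nat.Coprime p (11 * ∏ p ∈ S, p) := by
    intro p hp
    obtain ⟨hpD, h5⟩ := mem_filter.1 (hBL hp)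
    obtain ⟨hprime, h11⟩ := hD p hpD
    exact ⟨h5, Nat.Coprime.mul_right ((Nat.coprime_primes hprime (by norm_num)).2 h11)
      (hprime.coprime_prod_of_notMem hSprime fun h => (mem_sdiff.1 h).2 hp)⟩
  have hmSB : m.primeFactors ⊆ insert 11 (S ∪ B) := by
    intro p hp
    rw [sdiff_union_of_subset hBD, mem_insert, mem_erase]
    tauto
  obtain ⟨x, hx, hxc, hxm⟩ := exists_lt_modEq_coprime (k := 5) (by norm_num : Nat.Prime 11)
    (by omega) hc S B hSprime (fun h => (hD 11 (mem_sdiff.1 h).1).2 rfl) hB (by omega) hmSB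
  refine ⟨x, hxc, ?_, hxm⟩
  -- `x < 55 * ∏ S`: if four primes were set aside then `5² 13² ≥ 32 * 55` absorbs the constant,
  -- otherwise `∏ S ∣ 6`.
  rcases le_or_gt 4 #L with hL | hL
  · have hprod : (∏ p ∈ S, p) * ∏ p ∈ B, p ≤ m := by
      rw [prod_sdiff hBD]
      exact Nat.le_of_dvd (by omega)
        ((prod_dvd_prod_of_subset _ _ _ (erase_subset _ _)).trans (Nat.prod_primeFactors_dvd m))
    have hB4225 := le_prod_of_card_eq_four B
      (fun p hp => ⟨(hD p (hBD hp)).1, (hB p hp).1, (hD p (hBD hp)).2⟩) (by omega)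
    nlinarith
  · have hBL' : B = L := eq_of_subset_of_card_le hBL (by omega)
    have hS : S ⊆ {2, 3} := by
      intro p hp
      obtain ⟨hpD, hpB⟩ := mem_sdiff.1 hp
      have h5 : p < 5 := by
        by_contra! h
        exact hpB (hBL' ▸ mem_filter.2 ⟨hpD, h⟩)
      have hprime := (hD p hpD).1
      interval_cases p <;> norm_num at *
    have hP6 : ∏ p ∈ S, p ≤ 6 :=
      Nat.le_of_dvd (by norm_num) (by simpa using prod_dvd_prod_of_subset _ _ id hS)
    nlinarith

theorem notMem_A_1674 : 1674 ∉ A := by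
  rintro ⟨a, b, hn, ha, hb, hab⟩
  obtain ⟨rfl, rfl⟩ | ⟨rfl, rfl⟩ | ⟨rfl, rfl⟩ | ⟨rfl, rfl⟩ :
      a = 9 ∧ b = 144 ∨ a = 20 ∧ b = 134 ∨ a = 31 ∧ b = 124 ∨ a = 42 ∧ b = 114 := by
    omega
  all_goals norm_num at hab

theorem mem_A_of_not_dvd {n : ℕ} (hn : 10539 ≤ n) (h11 : ¬ 11 ∣ n) : n ∈ A := by
  obtain ⟨a, ha, hsize, hcop⟩ := exists_modEq_coprime_of_le (c := 10 * n) (by omega) hn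
  unfold Nat.ModEq at ha
  obtain ⟨b, rfl⟩ : ∃ b, n = a * 10 + 11 * b := ⟨(n - 10 * a) / 11, by omega⟩
  rw [Nat.coprime_mul_left_add_right] at hcop
  exact ⟨a, b, by ring, by omega, by omega, hcop.coprime_mul_left_right⟩

theorem eleven_mul_mem_A {μ : ℕ} (hμ : 10539 ≤ μ) : 11 * μ ∈ A := by
  -- `b = μ - 10a ≡ μ + a (mod 11)` must not vanish.
  obtain ⟨a, ha, hsize, hcop⟩ :=
    exists_modEq_coprime_of_le (c := if μ % 11 = 10 then 2 else 1) (by split_ifs <;> norm_num) hμ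
  unfold Nat.ModEq at ha
  obtain ⟨b, rfl⟩ : ∃ b, μ = a * 10 + b := ⟨μ - 10 * a, by omega⟩
  have hb : ¬ 11 ∣ b := by split_ifs at ha <;> omega
  rw [Nat.coprime_mul_left_add_right] at hcop
  refine ⟨11 * a, b, by ring, by split_ifs at ha <;> omega, by omega, ?_⟩
  exact Nat.Coprime.mul_left ((Nat.Prime.coprime_iff_not_dvd (by norm_num)).2 hb) hcop

def isWitness (n a : ℕ) : Bool :=
  1 ≤ a && 32 * a + 11 ≤ n && Nat.gcd a ((n - 10 * a) / 11) = 1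

-- The candidates `a ≡ -n (mod 11)` are those with `11 ∣ n - 10 * a`.
def checkMemA (n : ℕ) : Bool :=
  (List.range 12).any fun t => isWitness n ((11 - n % 11) % 11 + 11 * t)

theorem mem_A_of_checkMemA {n : ℕ} (h : checkMemA n = true) : n ∈ A := by
  obtain ⟨t, -, ht⟩ := List.any_eq_true.1 h
  simp only [isWitness, Bool.and_eq_true, decide_eq_true_eq] at ht
  obtain ⟨⟨ha, hsize⟩, hcop⟩ := ht
  exact ⟨_, _, by omega, ha, by omega, hcop⟩

theorem mem_A_of_lt {n : ℕ} (h₁ : 1674 < n) (h₂ : n < 10539) : n ∈ A := by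
  have hall : (List.range 10539).all (fun n => n ≤ 1674 || checkMemA n) = true := by
    decide +kernel
  refine mem_A_of_checkMemA ?_
  simpa [h₁.not_ge] using List.all_eq_true.1 hall n (List.mem_range.2 h₂)

theorem eleven_mul_mem_A_of_lt {μ : ℕ} (h₁ : 958 < μ) (h₂ : μ < 10539) : 11 * μ ∈ A := by
  have hall : (List.range 10539).all (fun μ => μ ≤ 958 || checkMemA (11 * μ)) = true := by
    decide +kernel
  refine mem_A_of_checkMemA ?_
  simpa [h₁.not_ge] using List.all_eq_true.1 hall μ (List.mem_range.2 h₂)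

theorem stmt_3 : 1674 ∉ A ∧ ∀ n : ℕ, 1674 < n → n ∈ A := by
  refine ⟨notMem_A_1674, fun n hn => ?_⟩
  rcases lt_or_ge n 10539 with hn' | hn'
  · exact mem_A_of_lt hn hn'
  by_cases h11 : 11 ∣ n
  · obtain ⟨μ, rfl⟩ := h11
    rcases lt_or_ge μ 10539 with hμ | hμ
    · exact eleven_mul_mem_A_of_lt (by omega) hμ
    · exact eleven_mul_mem_A hμ
  · exact mem_A_of_not_dvd hn' h11
end

section
/- The complement in ℕ of the set A = {10a + 11b : a ≥ 1, b ≥ 2a+1, gcd(a,b) = 1} is finite (equivalently, A has bounded gaps: there exists M such that every n > M lies in A). -/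
open Finset

theorem exists_lt_coprime_add_mul {n x₀ d T : ℕ} (hn : n ≠ 0)
    (hfactor : ∀ p ∈ n.primeFactors, ∀ t, p ∣ x₀ + d * t → T ≤ p ∧ p.Coprime d)
    (hT : #{p ∈ n.primeFactors | T ≤ p} < T) :
    ∃ t < T, (x₀ + d * t).Coprime n := by
  by_contra! h
  set f : ℕ → ℕ := fun t => ((x₀ + d * t).gcd n).minFac
  have hf : ∀ t < T, f t ∈ n.primeFactors ∧ f t ∣ x₀ + d * t := fun t ht =>
    have hdvd := Nat.minFac_dvd ((x₀ + d * t).gcd n)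
    ⟨Nat.mem_primeFactors.2 ⟨Nat.minFac_prime (h t ht), hdvd.trans (Nat.gcd_dvd_right _ _), hn⟩,
      hdvd.trans (Nat.gcd_dvd_left _ _)⟩
  have hmaps : ∀ t ∈ range T, f t ∈ {p ∈ n.primeFactors | T ≤ p} := by
    intro t ht
    obtain ⟨hp, hdvd⟩ := hf t (mem_range.1 ht)
    exact mem_filter.2 ⟨hp, (hfactor _ hp t hdvd).1⟩
  have hinj : Set.InjOn f (range T) := by
    intro t ht t' ht' heq
    rw [coe_range, Set.mem_Iio] at ht ht'
    obtain ⟨hp, hdvd⟩ := hf t ht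
    obtain ⟨-, hdvd'⟩ := hf t' ht'
    obtain ⟨hTp, hcop⟩ := hfactor _ hp t hdvd
    rw [← heq] at hdvd'
    have : x₀ + d * t ≡ x₀ + d * t' [MOD f t] :=
      (Nat.modEq_zero_iff_dvd.2 hdvd).trans (Nat.modEq_zero_iff_dvd.2 hdvd').symm
    exact ((Nat.ModEq.add_left_cancel' x₀ this).cancel_left_of_coprime hcop).eq_of_lt_of_lt
      (by omega) (by omega)
  have := card_le_card_of_injOn f hmaps hinj
  rw [card_range] at this
  omega

theorem exists_modEq_coprime_lt {n q T : ℕ} (r : ℕ) (hn : n ≠ 0) (hq₀ : q ≠ 0)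
    (hq : q.Coprime n) (hT : #{p ∈ n.primeFactors | T ≤ p} < T) :
    ∃ x, x ≡ r [MOD q] ∧ x.Coprime n ∧ x < q * (∏ p ∈ n.primeFactors with p < T, p) * T := by
  set m := ∏ p ∈ n.primeFactors with p < T, p
  have hm : m ∣ n :=
    (prod_dvd_prod_of_subset _ _ id (filter_subset _ _)).trans (Nat.prod_primeFactors_dvd n)
  have hqm : q.Coprime m := hq.coprime_dvd_right hm
  set x₀ := (Nat.chineseRemainder hqm r 1 : ℕ)
  obtain ⟨hx₀q, hx₀m⟩ := (Nat.chineseRemainder hqm r 1).2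
  have hx₀ : x₀ < q * m :=
    Nat.chineseRemainder_lt_mul hqm r 1 hq₀ (ne_zero_of_dvd_ne_zero hn hm)
  have hprime : ∀ p ∈ n.primeFactors, ∀ t, p ∣ x₀ + q * m * t → T ≤ p ∧ p.Coprime (q * m) := by
    intro p hp t hpx
    have hp' := Nat.prime_of_mem_primeFactors hp
    have hpm : ¬ p ∣ m := by
      intro hpm
      have hpx₀ : p ∣ x₀ := (Nat.dvd_add_left (hpm.mul_left q |>.mul_right t)).1 hpx
      have : 1 ≡ 0 [MOD p] := (hx₀m.of_dvd hpm).symm.trans (Nat.modEq_zero_iff_dvd.2 hpx₀)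
      exact hp'.one_lt.ne' (Nat.dvd_one.1 (Nat.modEq_zero_iff_dvd.1 this))
    have hpq : ¬ p ∣ q := fun hpq =>
      hp'.ne_one (Nat.eq_one_of_dvd_coprimes hq hpq (Nat.dvd_of_mem_primeFactors hp))
    refine ⟨?_, Nat.Coprime.mul_right (hp'.coprime_iff_not_dvd.2 hpq)
      (hp'.coprime_iff_not_dvd.2 hpm)⟩
    by_contra! hpT
    exact hpm (dvd_prod_of_mem _ (mem_filter.2 ⟨hp, hpT⟩))
  obtain ⟨t, ht, hcop⟩ := exists_lt_coprime_add_mul hn hprime hT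
  refine ⟨x₀ + q * m * t, ?_, hcop, ?_⟩
  · have : q * m * t ≡ 0 [MOD q] :=
      Nat.modEq_zero_iff_dvd.2 (dvd_mul_of_dvd_left (dvd_mul_right q m) t)
    simpa using (this.add_left x₀).trans (hx₀q.add_right 0)
  · calc x₀ + q * m * t < q * m * (t + 1) := by linarith
      _ ≤ q * m * T := by gcongr; omega

theorem mul_prod_primeFactors_lt_card_succ_le {n : ℕ} (hn : 4 ^ 360 ≤ n) :
    352 * (∏ p ∈ n.primeFactors with p < #n.primeFactors + 1, p) * (#n.primeFactors + 1) ≤ n := by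
  set ω := #n.primeFactors
  set m := ∏ p ∈ n.primeFactors with p < ω + 1, p
  have hn₀ : n ≠ 0 := (lt_of_lt_of_le (by positivity) hn).ne'
  rcases lt_or_ge ω 352 with hω | hω
  · have hm : m ≤ 4 ^ 351 :=
      calc m ≤ primorial ω := by
            refine Nat.le_of_dvd (primorial_pos ω) (prod_dvd_prod_of_subset _ _ id fun p hp => ?_)
            obtain ⟨hp, hpω⟩ := mem_filter.1 hp
            exact mem_filter.2 ⟨mem_range.2 hpω, Nat.prime_of_mem_primeFactors hp⟩
        _ ≤ 4 ^ ω := primorial_le_four_pow ω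
        _ ≤ 4 ^ 351 := pow_le_pow_right₀ (by norm_num) (by omega)
    calc 352 * m * (ω + 1) ≤ 352 * 4 ^ 351 * 352 := by gcongr; omega
      _ = 352 * 352 * 4 ^ 351 := mul_right_comm _ _ _
      _ ≤ 4 ^ 9 * 4 ^ 351 := by gcongr; norm_num
      _ = 4 ^ 360 := by rw [← pow_add]
      _ ≤ n := hn
  · -- the primes below `ω + 1` miss `0`, `1` and `4`, so at least two prime factors are larger
    have hsmall : #{p ∈ n.primeFactors | p < ω + 1} ≤ ω - 2 :=
      calc _ ≤ #((Icc 2 ω).erase 4) := card_le_card fun p hp => by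
            obtain ⟨hp, hpω⟩ := mem_filter.1 hp
            have hp' := Nat.prime_of_mem_primeFactors hp
            have : p ≠ 4 := by rintro rfl; norm_num at hp'
            simp only [mem_erase, mem_Icc]
            exact ⟨this, hp'.two_le, by omega⟩
        _ = ω - 2 := by rw [card_erase_of_mem (by simp only [mem_Icc]; omega), Nat.card_Icc]; omega
    have hbig : 2 ≤ #{p ∈ n.primeFactors | ¬ p < ω + 1} := by
      have := card_filter_add_card_filter_not (s := n.primeFactors) (fun p => p < ω + 1)
      omega
    calc 352 * m * (ω + 1) ≤ m * (ω + 1) * (ω + 1) := by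
          rw [mul_comm 352 m, mul_assoc, mul_assoc]; gcongr; omega
      _ = m * (ω + 1) ^ 2 := by ring
      _ ≤ m * (ω + 1) ^ #{p ∈ n.primeFactors | ¬ p < ω + 1} := by
          gcongr; omega
      _ ≤ m * ∏ p ∈ n.primeFactors with ¬ p < ω + 1, p := by
          gcongr
          exact pow_card_le_prod _ _ _ fun p hp => not_lt.1 (mem_filter.1 hp).2
      _ = ∏ p ∈ n.primeFactors, p := prod_filter_mul_prod_filter_not _ _ _
      _ ≤ n := Nat.le_of_dvd (Nat.pos_of_ne_zero hn₀) (Nat.prod_primeFactors_dvd n)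

theorem mem_A_of_coprime {n a : ℕ} (ha : 1 ≤ a) (hsize : 32 * a + 11 ≤ n) (hmod : 11 ∣ n + a)
    (hcop : a.Coprime n) : n ∈ A := by
  obtain ⟨c, hc⟩ := hmod
  have hn : n = 10 * a + 11 * (c - a) := by omega
  refine ⟨a, c - a, hn, ha, by omega, ?_⟩
  rw [hn, show 10 * a + 11 * (c - a) = 11 * (c - a) + a * 10 by ring,
    Nat.coprime_add_mul_left_right] at hcop
  exact hcop.coprime_dvd_right (dvd_mul_left _ 11)

theorem mem_A_of_eleven_dvd {n : ℕ} (hn : 3883 ≤ n) (h11 : 11 ∣ n) : n ∈ A := by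
  obtain ⟨m, rfl⟩ := h11
  have h11 : Nat.Prime 11 := by norm_num
  by_cases hm : 11 ∣ m
  · exact ⟨11, m - 10, by omega, by norm_num, by omega, h11.coprime_iff_not_dvd.2 (by omega)⟩
  · exact ⟨121, m - 110, by omega, by norm_num, by omega,
      (h11.coprime_iff_not_dvd.2 (by omega)).pow_left 2⟩

theorem mem_A_of_not_eleven_dvd {n : ℕ} (hn : 4 ^ 360 ≤ n) (h11 : ¬ 11 ∣ n) : n ∈ A := by
  have hn₁ : 1 < n := lt_of_lt_of_le (by norm_num) hn
  obtain ⟨a, ha, hcop, hlt⟩ := exists_modEq_coprime_lt (10 * n) (by omega) (by norm_num)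
    ((Nat.Prime.coprime_iff_not_dvd (by norm_num)).2 h11)
    (Nat.lt_succ_of_le (card_filter_le n.primeFactors _))
  have hsize := mul_prod_primeFactors_lt_card_succ_le hn
  have ha₀ : a ≠ 0 := by rintro rfl; exact hn₁.ne' (Nat.coprime_zero_left n |>.1 hcop)
  refine mem_A_of_coprime (Nat.one_le_iff_ne_zero.2 ha₀) (by linarith) ?_ hcop
  unfold Nat.ModEq at ha
  omega

theorem stmt_4 : (Aᶜ : Set ℕ).Finite := by
  refine (Set.finite_Iio (4 ^ 360)).subset fun n hn => ?_
  by_contra! hlarge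
  rw [Set.mem_Iio, not_lt] at hlarge
  have h3883 : 3883 ≤ 4 ^ 360 :=
    (by norm_num : 3883 ≤ 4 ^ 6).trans (pow_le_pow_right₀ (by norm_num) (by norm_num))
  by_cases h11 : 11 ∣ n
  · exact hn (mem_A_of_eleven_dvd (h3883.trans hlarge) h11)
  · exact hn (mem_A_of_not_eleven_dvd hlarge h11)
end

section
/- For every k ≥ 3 and every natural number q ≥ 1 with gcd(11, q) = 1, the number 11^k · q belongs to A = {10a + 11b : a ≥ 1, b ≥ 2a+1, gcd(a,b) = 1}. -/
/-! The witness is `a = 11`, `b = 11 ^ (k - 1) * q - 10`: then `10 a + 11 b = 11 ^ k * q`,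
`b ≥ 121 - 10 ≥ 2 a + 1`, and `b ≡ -10 (mod 11)` is prime to `11`. -/

theorem ten_mul_eleven_add_eleven_mul_mem_A {b : ℕ} (hb : 23 ≤ b) (h11 : ¬ 11 ∣ b) :
    10 * 11 + 11 * b ∈ A :=
  ⟨11, b, rfl, by norm_num, hb, (Nat.Prime.coprime_iff_not_dvd (by norm_num)).2 h11⟩

theorem stmt_7_general (k q : ℕ) (hk : 3 ≤ k) (hq : 1 ≤ q) :
    11 ^ k * q ∈ A := by
  obtain ⟨j, rfl⟩ : ∃ j, k = j + 1 := ⟨k - 1, by omega⟩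
  have h121 : 121 ≤ 11 ^ j * q :=
    calc 121 = 11 ^ 2 * 1 := by norm_num
      _ ≤ 11 ^ j * q := Nat.mul_le_mul (Nat.pow_le_pow_right (by norm_num) (by omega)) hq
  have hdvd : 11 ∣ 11 ^ j * q := Dvd.dvd.mul_right (dvd_pow_self 11 (by omega)) q
  have hsplit : 11 ^ (j + 1) * q = 10 * 11 + 11 * (11 ^ j * q - 10) := by
    rw [pow_succ, mul_right_comm]; omega
  rw [hsplit]
  exact ten_mul_eleven_add_eleven_mul_mem_A (by omega) (by omega)

theorem stmt_7 (k q : ℕ) (hk : 3 ≤ k) (hq : 1 ≤ q) (h : Nat.gcd 11 q = 1) :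
    11 ^ k * q ∈ A :=
  stmt_7_general k q hk hq
end

section
/- For every natural number q ≥ 3 with gcd(11, q) = 1, the number 121·q belongs to A, while 121 and 242 do not belong to A, where A = {10a + 11b : a ≥ 1, b ≥ 2a+1, gcd(a,b) = 1}. -/
/-
The witness a = 11, b = 11q - 10 puts 121q in A for q ≥ 3; coprimality holds since
b ≡ 1 (mod 11). Conversely, if 11 ∣ 10a + 11b then 11 ∣ a, so a ≥ 11 and
10a + 11b ≥ 10a + 11(2a + 1) ≥ 363, which excludes 121 and 242.
-/

theorem mul_mem_A {q : ℕ} (hq : 3 ≤ q) : 121 * q ∈ A := by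
  refine ⟨11, 11 * q - 10, by omega, by norm_num, by omega, ?_⟩
  rw [Nat.gcd_rec, show (11 * q - 10) % 11 = 1 by omega, Nat.gcd_one_left]

theorem le_of_mem_A_of_eleven_dvd {n : ℕ} (hn : n ∈ A) (h11 : 11 ∣ n) : 363 ≤ n := by
  obtain ⟨a, b, rfl, ha₀, hb, -⟩ := hn
  have ha : 11 ∣ a :=
    (Nat.Coprime.dvd_mul_left (by norm_num : Nat.Coprime 11 10)).mp
      ((Nat.dvd_add_left (dvd_mul_right 11 b)).mp h11)
  have : 11 ≤ a := Nat.le_of_dvd ha₀ ha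
  omega

theorem stmt_8 : (∀ q : ℕ, 3 ≤ q → Nat.gcd 11 q = 1 → 121 * q ∈ A) ∧
    121 ∉ A ∧ 242 ∉ A :=
  ⟨fun _ hq _ => mul_mem_A hq,
    fun h => absurd (le_of_mem_A_of_eleven_dvd h (by norm_num)) (by norm_num),
    fun h => absurd (le_of_mem_A_of_eleven_dvd h (by norm_num)) (by norm_num)⟩
end

section
/- For every natural number q ≥ 33 with q ∉ {43, 54, 76, 120}, the number 11q belongs to A = {10a + 11b : a ≥ 1, b ≥ 2a+1, gcd(a,b) = 1}. -/
/-!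
Any representation `11 q = 10 a + 11 b` has `a = 11 k` and `b = q - 10 k`, and then
`gcd (11 k, q - 10 k) = 1` exactly when `gcd (k, q) = 1` and `11 ∤ q - 10 k`.
For `q ≢ 10 (mod 11)` the choice `k = 1` works as soon as `q ≥ 33`. For `q ≡ 10 (mod 11)`
the primes `k ∈ {2, 3, 5, 11}` are all `≢ 1 (mod 11)`, so it suffices that one of them does
not divide `q` and satisfies `32 k < q`; the only `q ≥ 33` for which none does are
`43, 54, 76, 120`.
-/

theorem mul_eleven_mem_A {k q : ℕ} (hk : 1 ≤ k) (hkq : 32 * k + 1 ≤ q) (hcop : k.Coprime q)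
    (h11 : ¬ 11 ∣ q - 10 * k) : 11 * q ∈ A := by
  refine ⟨11 * k, q - 10 * k, by omega, by omega, by omega, ?_⟩
  refine Nat.Coprime.mul_left ?_ ?_
  · exact (Nat.Prime.coprime_iff_not_dvd (by norm_num)).2 h11
  · rwa [Nat.Coprime, mul_comm 10 k, Nat.gcd_sub_mul_left_right (by omega)]

theorem mul_eleven_mem_A_of_prime {p q : ℕ} (hp : p.Prime) (hpq : 32 * p + 1 ≤ q) (hdvd : ¬ p ∣ q)
    (h11 : ¬ 11 ∣ q - 10 * p) : 11 * q ∈ A :=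
  mul_eleven_mem_A hp.one_le hpq ((hp.coprime_iff_not_dvd).2 hdvd) h11

theorem stmt_9 (q : ℕ) (hq : 33 ≤ q) (h : q ∉ ({43, 54, 76, 120} : Set ℕ)) :
    11 * q ∈ A := by
  simp only [Set.mem_insert_iff, Set.mem_singleton_iff, not_or] at h
  by_cases h10 : q % 11 = 10
  · by_cases h2 : 65 ≤ q ∧ ¬ 2 ∣ q
    · exact mul_eleven_mem_A_of_prime Nat.prime_two (by omega) h2.2 (by omega)
    by_cases h3 : 97 ≤ q ∧ ¬ 3 ∣ q
    · exact mul_eleven_mem_A_of_prime Nat.prime_three (by omega) h3.2 (by omega)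
    by_cases h5 : 161 ≤ q ∧ ¬ 5 ∣ q
    · exact mul_eleven_mem_A_of_prime Nat.prime_five (by omega) h5.2 (by omega)
    by_cases h11 : 353 ≤ q
    · exact mul_eleven_mem_A_of_prime (p := 11) (by norm_num) (by omega) (by omega) (by omega)
    obtain ⟨t, rfl⟩ : ∃ t, q = 11 * t + 10 := ⟨q / 11, by omega⟩
    have ht : t ≤ 31 := by omega
    interval_cases t <;> omega
  · exact mul_eleven_mem_A le_rfl (by omega) (Nat.coprime_one_left q) (by omega)
end

section
/- 1320 is the largest multiple of 11 that does not belong to A: 1320 ∉ A, and every multiple of 11 greater than 1320 belongs to A, where A = {10a + 11b : a ≥ 1, b ≥ 2a+1, gcd(a,b) = 1}. -/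
lemma coprime_eleven_mul_iff (k b : ℕ) :
    Nat.Coprime (11 * k) b ↔ Nat.Coprime k (b + 10 * k) ∧ ¬ 11 ∣ b + 11 * k := by
  rw [Nat.coprime_mul_iff_left, Nat.coprime_add_mul_right_right,
    Nat.prime_eleven.coprime_iff_not_dvd, Nat.dvd_add_left (dvd_mul_right 11 k), and_comm]

lemma eleven_mul_mem_A_iff (m : ℕ) :
    11 * m ∈ A ↔ ∃ k, 1 ≤ k ∧ 32 * k + 1 ≤ m ∧ Nat.Coprime k m ∧ ¬ 11 ∣ m + k := by
  constructor
  · rintro ⟨a, b, hsum, ha, hab, hgcd⟩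
    obtain ⟨k, rfl⟩ : 11 ∣ a := by omega
    obtain ⟨hkm, h11⟩ := (coprime_eleven_mul_iff k b).1 hgcd
    obtain rfl : m = b + 10 * k := by omega
    exact ⟨k, by omega, by omega, hkm, by omega⟩
  · rintro ⟨k, hk, hkm, hcop, h11⟩
    refine ⟨11 * k, m - 10 * k, by omega, by omega, by omega, ?_⟩
    obtain ⟨b, rfl⟩ : ∃ b, m = b + 10 * k := ⟨m - 10 * k, by omega⟩
    rw [Nat.add_sub_cancel]
    exact (coprime_eleven_mul_iff k b).2 ⟨hcop, by omega⟩

lemma eleven_mul_mem_A_of_lt_s11 {m : ℕ} (hm : 120 < m) : 11 * m ∈ A := by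
  rw [eleven_mul_mem_A_iff]
  have of_prime {p : ℕ} (hp : p.Prime) (hpm : ¬ p ∣ m) (h11 : ¬ 11 ∣ m + p)
      (hle : 32 * p + 1 ≤ m) : ∃ k, 1 ≤ k ∧ 32 * k + 1 ≤ m ∧ Nat.Coprime k m ∧ ¬ 11 ∣ m + k :=
    ⟨p, hp.one_le, hle, hp.coprime_iff_not_dvd.2 hpm, h11⟩
  by_cases h1 : ¬ 11 ∣ m + 1
  · exact ⟨1, le_rfl, by omega, Nat.coprime_one_left m, h1⟩
  by_cases h2 : ¬ 2 ∣ m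
  · exact of_prime Nat.prime_two h2 (by omega) (by omega)
  by_cases h3 : ¬ 3 ∣ m
  · exact of_prime Nat.prime_three h3 (by omega) (by omega)
  by_cases h5 : ¬ 5 ∣ m
  · exact of_prime Nat.prime_five h5 (by omega) (by omega)
  exact of_prime Nat.prime_eleven (by omega) (by omega) (by omega)

theorem stmt_11 : 1320 ∉ A ∧ ∀ n : ℕ, 11 ∣ n → 1320 < n → n ∈ A := by
  refine ⟨?_, ?_⟩
  · rw [show 1320 = 11 * 120 by rfl, eleven_mul_mem_A_iff]
    rintro ⟨k, hk, hkm, hcop, h11⟩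
    have : k ≤ 3 := by omega
    interval_cases k <;> revert hcop h11 <;> decide
  · rintro _ ⟨m, rfl⟩ hm
    exact eleven_mul_mem_A_of_lt_s11 (by omega)
end

section
/- Let p ≥ 43 be a prime with p = 10a + 11b, gcd(a,b) = 1, a ≥ 1, b ≥ 2a+1. Then for every k ≥ 2 and every q ≥ 1 with gcd(p, q) = 1, the number p^k · q belongs to A = {10a' + 11b' : a' ≥ 1, b' ≥ 2a'+1, gcd(a',b') = 1}. -/
lemma mul_add_eleven_eq {a b M : ℕ} (hbM : 10 ≤ b * M) :
    b * (a * M + 11) = a * (b * M - 10) + (10 * a + 11 * b) := by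
  obtain ⟨c, hc⟩ := Nat.exists_eq_add_of_le hbM
  rw [hc, Nat.add_sub_cancel_left]
  linear_combination a * hc

lemma gcd_mul_add_eleven_dvd {a b M : ℕ} (hbM : 10 ≤ b * M) :
    Nat.gcd (a * M + 11) (b * M - 10) ∣ 10 * a + 11 * b := by
  have hleft : Nat.gcd (a * M + 11) (b * M - 10) ∣ b * (a * M + 11) :=
    (Nat.gcd_dvd_left _ _).mul_left b
  have hright : Nat.gcd (a * M + 11) (b * M - 10) ∣ a * (b * M - 10) :=
    (Nat.gcd_dvd_right _ _).mul_left a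
  rw [mul_add_eleven_eq hbM] at hleft
  exact (Nat.dvd_add_right hright).mp hleft

lemma coprime_mul_add_eleven {p a b M : ℕ} (hp : p.Prime) (hp11 : p ≠ 11)
    (hdec : p = 10 * a + 11 * b) (hpM : p ∣ M) (hbM : 10 ≤ b * M) :
    Nat.Coprime (a * M + 11) (b * M - 10) := by
  have hdvd : Nat.gcd (a * M + 11) (b * M - 10) ∣ p := hdec ▸ gcd_mul_add_eleven_dvd hbM
  refine (hp.eq_one_or_self_of_dvd _ hdvd).resolve_right fun hgp => hp11 ?_
  have hpa : p ∣ a * M + 11 := hgp ▸ Nat.gcd_dvd_left _ _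
  have hp_dvd_11 : p ∣ 11 := (Nat.dvd_add_right (hpM.mul_left a)).mp hpa
  exact (Nat.prime_dvd_prime_iff_eq hp (by norm_num)).mp hp_dvd_11

lemma mul_mem_A_of_dvd {p a b M : ℕ} (hp : p.Prime) (hp11 : p ≠ 11)
    (hdec : p = 10 * a + 11 * b) (hb : 2 * a + 1 ≤ b) (hpM : p ∣ M) (hM : 33 ≤ M) :
    p * M ∈ A := by
  have hbM : (2 * a + 1) * M ≤ b * M := Nat.mul_le_mul_right M hb
  have hsplit : (2 * a + 1) * M = 2 * (a * M) + M := by ring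
  refine ⟨a * M + 11, b * M - 10, ?_, by omega, by omega,
    coprime_mul_add_eleven hp hp11 hdec hpM (by omega)⟩
  have hpM_eq : p * M = 10 * (a * M) + 11 * (b * M) := by rw [hdec]; ring
  omega

theorem stmt_13_general (p a b : ℕ) (hp : p.Prime) (hp43 : 43 ≤ p)
    (hdec : p = 10 * a + 11 * b) (hb : 2 * a + 1 ≤ b) :
    ∀ k q : ℕ, 2 ≤ k → 1 ≤ q → Nat.gcd p q = 1 → p ^ k * q ∈ A := by
  intro k q hk hq _
  have hpow : p ^ k * q = p * (p ^ (k - 1) * q) := by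
    rw [← mul_assoc, ← pow_succ', Nat.sub_add_cancel (by omega)]
  have hpM : p ∣ p ^ (k - 1) * q := (dvd_pow_self p (by omega)).mul_right q
  have hM : p ≤ p ^ (k - 1) * q :=
    (Nat.le_self_pow (by omega) p).trans (Nat.le_mul_of_pos_right _ hq)
  rw [hpow]
  exact mul_mem_A_of_dvd hp (by omega) hdec hb hpM (by omega)

theorem stmt_13 (p a b : ℕ) (hp : p.Prime) (hp43 : 43 ≤ p)
    (hdec : p = 10 * a + 11 * b) (ha : 1 ≤ a) (hb : 2 * a + 1 ≤ b)
    (hgcd : Nat.gcd a b = 1) :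
    ∀ k q : ℕ, 2 ≤ k → 1 ≤ q → Nat.gcd p q = 1 → p ^ k * q ∈ A :=
  stmt_13_general p a b hp hp43 hdec hb
end

section
/- Let p ≥ 43 be a prime with p = 10a + 11b, gcd(a,b) = 1, a ≥ 1, b ≥ 2a+1. Then for every q ≥ 33 with gcd(p, q) = 1, the number p·q belongs to A = {10a' + 11b' : a' ≥ 1, b' ≥ 2a'+1, gcd(a',b') = 1}. -/
namespace Nat

theorem gcd_dvd_of_mul_eq_mul_add {x y a b c : ℕ} (h : b * x = a * y + c) : gcd x y ∣ c :=
  (Nat.dvd_add_right (Dvd.dvd.mul_left (gcd_dvd_right x y) a)).mp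
    (h ▸ Dvd.dvd.mul_left (gcd_dvd_left x y) b)

theorem gcd_eq_one_of_gcd_dvd_prime {p x y : ℕ} (hp : p.Prime) (hx : ¬ p ∣ x)
    (h : gcd x y ∣ p) : gcd x y = 1 :=
  (hp.eq_one_or_self_of_dvd _ h).resolve_right fun hp' => hx (hp' ▸ gcd_dvd_left x y)

theorem Prime.gcd_shift_eq_one {p m n a b q : ℕ} (hp : p.Prime) (hpn : ¬ p ∣ 2 * n)
    (hdec : p = m * a + n * b) (hn : n ≤ a * q) (hm : m ≤ b * q) :
    gcd (a * q + n) (b * q - m) = 1 ∨ gcd (a * q - n) (b * q + m) = 1 := by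
  by_cases hplus : p ∣ a * q + n
  · right
    have hminus : ¬ p ∣ a * q - n := fun hminus => hpn <| by
      simpa [show a * q + n - (a * q - n) = 2 * n by omega] using Nat.dvd_sub hplus hminus
    refine gcd_eq_one_of_gcd_dvd_prime hp hminus ?_
    rw [gcd_comm]
    exact gcd_dvd_of_mul_eq_mul_add (a := b) (b := a) (by zify [hn]; rw [hdec]; push_cast; ring)
  · left
    exact gcd_eq_one_of_gcd_dvd_prime hp hplus
      (gcd_dvd_of_mul_eq_mul_add (a := a) (b := b) (by zify [hm]; rw [hdec]; push_cast; ring))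

end Nat

theorem stmt_14_general (p a b : ℕ) (hp : p.Prime) (hp43 : 43 ≤ p)
    (hdec : p = 10 * a + 11 * b) (ha : 1 ≤ a) (hb : 2 * a + 1 ≤ b) :
    ∀ q : ℕ, 33 ≤ q → Nat.gcd p q = 1 → p * q ∈ A := by
  intro q hq _
  have haq : 33 ≤ a * q := by nlinarith
  have hbq : 2 * (a * q) + 33 ≤ b * q := by nlinarith
  have hpq : p * q = 10 * (a * q) + 11 * (b * q) := by rw [hdec]; ring
  have hp22 : ¬ p ∣ 2 * 11 := fun h => by have := Nat.le_of_dvd (by norm_num) h; omega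
  rcases hp.gcd_shift_eq_one (m := 10) (n := 11) (q := q) hp22 hdec (by omega) (by omega)
    with h | h
  · exact ⟨a * q + 11, b * q - 10, by omega, by omega, by omega, h⟩
  · exact ⟨a * q - 11, b * q + 10, by omega, by omega, by omega, h⟩

theorem stmt_14 (p a b : ℕ) (hp : p.Prime) (hp43 : 43 ≤ p)
    (hdec : p = 10 * a + 11 * b) (ha : 1 ≤ a) (hb : 2 * a + 1 ≤ b)
    (hgcd : Nat.gcd a b = 1) :
    ∀ q : ℕ, 33 ≤ q → Nat.gcd p q = 1 → p * q ∈ A :=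
  stmt_14_general p a b hp hp43 hdec ha hb
end

section
/- Every natural number n ≡ 10 (mod 11) with n ≥ 43 belongs to A = {10a + 11b : a ≥ 1, b ≥ 2a+1, gcd(a,b) = 1}, and the only elements of {10 + 11k : k ≥ 0} not in A are 10, 21, 32. -/
lemma le_of_mem_A {n : ℕ} (hn : n ∈ A) : 43 ≤ n := by
  obtain ⟨a, b, rfl, ha, hb, -⟩ := hn
  omega

lemma mem_A_of_mod_eleven {n : ℕ} (hmod : n % 11 = 10) (hn : 43 ≤ n) : n ∈ A :=
  ⟨1, (n - 10) / 11, by omega, le_rfl, by omega, Nat.gcd_one_left _⟩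

theorem stmt_15 : (∀ n : ℕ, n % 11 = 10 → 43 ≤ n → n ∈ A) ∧
    (∀ n : ℕ, (∃ k : ℕ, n = 10 + 11 * k) → (n ∉ A ↔ n = 10 ∨ n = 21 ∨ n = 32)) := by
  refine ⟨fun n => mem_A_of_mod_eleven, ?_⟩
  rintro n ⟨k, rfl⟩
  constructor
  · intro hnA
    by_contra hsmall
    exact hnA (mem_A_of_mod_eleven (by omega) (by omega))
  · intro hsmall hA
    have := le_of_mem_A hA
    omega
end

section
/- If p is a prime in A with decomposition p = 10a + 11b (gcd(a,b) = 1, a ≥ 1, b ≥ 2a+1), p ≥ 43, and q ≥ 1 satisfies gcd(p,q) = 1, a·q ≥ 12 and (b − 2a)·q ≥ 33, then p·q belongs to A. -/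
theorem Nat.coprime_or_prime_dvd_of_mul_eq_mul_add {p a b x y : ℕ} (hp : p.Prime)
    (h : b * x = a * y + p) : x.Coprime y ∨ p ∣ x ∧ p ∣ y := by
  have hgp : x.gcd y ∣ p := by
    refine (Nat.dvd_add_right ((x.gcd_dvd_right y).mul_left a)).mp ?_
    exact h ▸ (x.gcd_dvd_left y).mul_left b
  rcases hp.eq_one_or_self_of_dvd _ hgp with h1 | hgp
  · exact Or.inl h1
  · exact Or.inr ⟨hgp ▸ x.gcd_dvd_left y, hgp ▸ x.gcd_dvd_right y⟩

theorem Nat.coprime_add_sub_or_coprime_sub_add {p a b c d x y : ℕ} (hp : p.Prime)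
    (hpd : ¬ p ∣ 2 * d) (hdec : p = c * a + d * b) (hxy : b * x = a * y)
    (hx : d ≤ x) (hy : c ≤ y) : (x + d).Coprime (y - c) ∨ (x - d).Coprime (y + c) := by
  obtain ⟨x, rfl⟩ := Nat.exists_eq_add_of_le' hx
  obtain ⟨y, rfl⟩ := Nat.exists_eq_add_of_le' hy
  simp only [Nat.add_sub_cancel]
  have hup : b * (x + d + d) = a * y + p := by rw [hdec]; linarith
  have hdown : a * (y + c + c) = b * x + p := by rw [hdec]; linarith
  rcases coprime_or_prime_dvd_of_mul_eq_mul_add hp hup with hco | ⟨hpx, -⟩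
  · exact Or.inl hco
  rcases coprime_or_prime_dvd_of_mul_eq_mul_add hp hdown with hco | ⟨-, hpx'⟩
  · exact Or.inr hco.symm
  exact absurd ((Nat.dvd_add_right hpx').mp (by rwa [add_assoc, ← two_mul] at hpx)) hpd

theorem stmt_19_general (p a b q : ℕ) (hp : p.Prime) (hp43 : 43 ≤ p)
    (hdec : p = 10 * a + 11 * b)
    (h1 : 12 ≤ a * q) (h2 : 33 ≤ (b - 2 * a) * q) : p * q ∈ A := by
  have hbq : 2 * (a * q) + 33 ≤ b * q := by rw [Nat.sub_mul, mul_assoc] at h2; omega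
  have hsplit : p * q = 10 * (a * q) + 11 * (b * q) := by rw [hdec]; ring
  have hp22 : ¬ p ∣ 2 * 11 := fun h => by have := Nat.le_of_dvd (by norm_num) h; omega
  rcases Nat.coprime_add_sub_or_coprime_sub_add (x := a * q) (y := b * q) hp hp22 hdec
      (by ring) (by omega) (by omega)
    with hco | hco
  · exact ⟨a * q + 11, b * q - 10, by omega, by omega, by omega, hco⟩
  · exact ⟨a * q - 11, b * q + 10, by omega, by omega, by omega, hco⟩

theorem stmt_19 (p a b q : ℕ) (hp : p.Prime) (hp43 : 43 ≤ p)
    (hdec : p = 10 * a + 11 * b) (ha : 1 ≤ a) (hb : 2 * a + 1 ≤ b)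
    (hgcd : Nat.gcd a b = 1) (hq : 1 ≤ q) (hpq : Nat.gcd p q = 1)
    (h1 : 12 ≤ a * q) (h2 : 33 ≤ (b - 2 * a) * q) : p * q ∈ A :=
  stmt_19_general p a b q hp hp43 hdec h1 h2
end
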